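/- Let n ≥ 2, ν > 0 and a ∈ ℝ∖{0}. The Gaussian density p_∞(z) = (4πν)^{−n} exp(−|z|²/(4ν)) on ℝ^{2n} satisfies the stationary Fokker–Planck identity ν Δ p_∞(z) − Σᵢ a (Σ_{j≠i} K(zⁱ−zʲ)) · ∇_{zⁱ} p_∞(z) + (1/2) ∇_z · (z p_∞(z)) = 0 at every z ∈ ℝ^{2n} with pairwise distinct components zⁱ. -/

import Mathlib

/-!
The Gaussian `g(z) = C exp(-|z|²/(4ν))` has gradient `-(z/(2ν)) g`, and the Fokker–Planck operator
splits into two parts that vanish separately. Coordinatewise, `ν ∂ₖ²g + ½ ∂ₖ(zₖ g) = 0`: the Gaussian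
is stationary for the Ornstein–Uhlenbeck part. The transport part equals `-(a g/(2ν)) Σᵢ ⟪uᵢ, zⁱ⟫`
with `uᵢ = Σ_{j≠i} K(zⁱ - zʲ)`, and this vanishes because `K` is odd and `K(x) ⊥ x`: the pairs
`(i, j)` and `(j, i)` together contribute `⟪K(zⁱ - zʲ), zⁱ - zʲ⟫ = 0`. This is the conservation of
`|z|²` by the point-vortex flow with equal vorticities.
-/

open Finset

/-- The Biot and Savart kernel `K(x) = x^⊥ / (2π|x|²)` on `ℝ² \ {0}`. -/
noncomputable def biotSavart (x : EuclideanSpace ℝ (Fin 2)) : EuclideanSpace ℝ (Fin 2) :=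
  (2 * Real.pi * ‖x‖ ^ 2)⁻¹ • (WithLp.equiv 2 (Fin 2 → ℝ)).symm ![-(x 1), x 0]

/-- Configuration space of `n` planar vortices. -/
abbrev Conf (n : ℕ) := Fin n → EuclideanSpace ℝ (Fin 2)

/-- Partial derivative of `f` at `z` in direction `d`. -/
noncomputable def pderiv {n : ℕ} (f : Conf n → ℝ) (d : Conf n) (z : Conf n) : ℝ :=
  fderiv ℝ f z d

/-- Second partial derivative of `f` at `z` in direction `d` (twice). -/
noncomputable def pderiv2 {n : ℕ} (f : Conf n → ℝ) (d : Conf n) (z : Conf n) : ℝ :=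
  fderiv ℝ (fun y => fderiv ℝ f y d) z d

/-- Unit direction moving the `k`-th coordinate of the `i`-th particle. -/
noncomputable def dir {n : ℕ} (i : Fin n) (k : Fin 2) : Conf n :=
  Function.update (0 : Conf n) i (EuclideanSpace.single k 1)

open scoped InnerProductSpace

theorem Finset.sum_sum_filter_ne_eq_zero_of_antisymm {ι M : Type*} [Fintype ι] [DecidableEq ι]
    [AddCommGroup M] [IsAddTorsionFree M] (f : ι → ι → M)
    (hf : ∀ i j, i ≠ j → f j i = -f i j) :
    ∑ i, ∑ j ∈ univ.filter (· ≠ i), f i j = 0 := by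
  set g : ι → ι → M := fun i j => if j ≠ i then f i j else 0
  have hg : ∀ i j, g j i = -g i j := by
    intro i j
    by_cases hij : i = j
    · simp [g, hij]
    · simp [g, hij, Ne.symm hij, hf i j hij]
  have hswap : ∑ i, ∑ j, g i j = -∑ i, ∑ j, g i j :=
    calc ∑ i, ∑ j, g i j = ∑ i, ∑ j, g j i := sum_comm
      _ = -∑ i, ∑ j, g i j := by
        simp only [← sum_neg_distrib]
        exact sum_congr rfl fun i _ => sum_congr rfl fun j _ => hg i j
  simp only [sum_filter]
  exact self_eq_neg.mp hswap

theorem biotSavart_neg (x : EuclideanSpace ℝ (Fin 2)) : biotSavart (-x) = -biotSavart x := by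
  ext k
  fin_cases k <;> simp [biotSavart]

theorem inner_biotSavart_self (x : EuclideanSpace ℝ (Fin 2)) : ⟪biotSavart x, x⟫_ℝ = 0 := by
  simp only [biotSavart, PiLp.inner_apply, Fin.sum_univ_two, PiLp.smul_apply,
    WithLp.equiv_symm_apply, Matrix.cons_val_zero, Matrix.cons_val_one,
    smul_eq_mul, Real.inner_apply]
  ring

theorem inner_biotSavart_sub_add_swap (x y : EuclideanSpace ℝ (Fin 2)) :
    ⟪biotSavart (x - y), x⟫_ℝ + ⟪biotSavart (y - x), y⟫_ℝ = 0 := by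
  rw [← neg_sub x y, biotSavart_neg, inner_neg_left, ← sub_eq_add_neg, ← inner_sub_right,
    inner_biotSavart_self]

theorem sum_sum_biotSavart_mul_eq_zero {n : ℕ} (z : Conf n) :
    ∑ i, ∑ k : Fin 2, (∑ j ∈ univ.filter (· ≠ i), biotSavart (z i - z j) k) * z i k = 0 := by
  have h : ∀ i, ∑ k : Fin 2, (∑ j ∈ univ.filter (· ≠ i), biotSavart (z i - z j) k) * z i k
      = ∑ j ∈ univ.filter (· ≠ i), ⟪biotSavart (z i - z j), z i⟫_ℝ := by
    intro i
    simp only [PiLp.inner_apply, Real.inner_apply, sum_mul]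
    exact sum_comm
  simp only [h]
  exact sum_sum_filter_ne_eq_zero_of_antisymm _ fun i j _ =>
    eq_neg_of_add_eq_zero_right (inner_biotSavart_sub_add_swap (z i) (z j))

section Gaussian

variable {n : ℕ}

noncomputable def gaussianConf (ν C : ℝ) (y : Conf n) : ℝ :=
  C * Real.exp (-(∑ i, ‖y i‖ ^ 2) / (4 * ν))

/-- `Conf n` carries the sup norm, so the Euclidean pairing `d ↦ Σᵢ ⟪yⁱ, dⁱ⟫` is written out. -/
noncomputable def confInnerL (y : Conf n) : Conf n →L[ℝ] ℝ :=
  ∑ i, (innerSL ℝ (y i)).comp (ContinuousLinearMap.proj i)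

theorem confInnerL_dir (y : Conf n) (i : Fin n) (k : Fin 2) : confInnerL y (dir i k) = y i k := by
  simp only [confInnerL, _root_.sum_apply, ContinuousLinearMap.comp_apply,
    ContinuousLinearMap.proj_apply, innerSL_apply_apply]
  rw [sum_eq_single i (fun j _ hj => by simp [dir, Function.update_of_ne hj]) (by simp)]
  simp [dir, EuclideanSpace.inner_single_right]

theorem hasFDerivAt_sum_norm_sq (y : Conf n) :
    HasFDerivAt (fun y : Conf n => ∑ i, ‖y i‖ ^ 2) (2 • confInnerL y) y := by
  rw [confInnerL, smul_sum]
  exact HasFDerivAt.fun_sum fun i _ => ((ContinuousLinearMap.proj i).hasFDerivAt (x := y)).norm_sq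

theorem hasFDerivAt_gaussianConf (ν C : ℝ) (y : Conf n) :
    HasFDerivAt (gaussianConf ν C) ((-(2 * ν)⁻¹ * gaussianConf ν C y) • confInnerL y) y := by
  have hexponent : HasFDerivAt (fun y : Conf n => -(∑ i, ‖y i‖ ^ 2) / (4 * ν))
      ((4 * ν)⁻¹ • -((2 : ℕ) • confInnerL y) : Conf n →L[ℝ] ℝ) y := by
    simp only [div_eq_inv_mul]
    exact (hasFDerivAt_sum_norm_sq y).fun_neg.const_mul _
  refine (hexponent.exp.const_mul C).congr_fderiv ?_
  ext d
  simp only [gaussianConf, smul_apply, neg_apply, smul_eq_mul, nsmul_eq_mul]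
  ring

theorem hasFDerivAt_coord (i : Fin n) (k : Fin 2) (y : Conf n) :
    HasFDerivAt (fun y : Conf n => y i k)
      ((EuclideanSpace.proj (𝕜 := ℝ) k).comp (ContinuousLinearMap.proj i)) y :=
  ((EuclideanSpace.proj (𝕜 := ℝ) k).comp (ContinuousLinearMap.proj (R := ℝ)
    (φ := fun _ : Fin n => EuclideanSpace ℝ (Fin 2)) i)).hasFDerivAt

theorem pderiv_gaussianConf (ν C : ℝ) (y : Conf n) (i : Fin n) (k : Fin 2) :
    pderiv (gaussianConf ν C) (dir i k) y = -(2 * ν)⁻¹ * y i k * gaussianConf ν C y := by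
  rw [pderiv, (hasFDerivAt_gaussianConf ν C y).fderiv, smul_apply, confInnerL_dir, smul_eq_mul]
  ring

theorem pderiv_const_mul_coord_mul_gaussianConf (ν C c : ℝ) (z : Conf n) (i : Fin n) (k : Fin 2) :
    pderiv (fun y => c * y i k * gaussianConf ν C y) (dir i k) z
      = c * (1 - (2 * ν)⁻¹ * z i k ^ 2) * gaussianConf ν C z := by
  have h := ((hasFDerivAt_coord i k z).const_mul c).fun_mul (hasFDerivAt_gaussianConf ν C z)
  rw [pderiv, h.fderiv]
  simp only [add_apply, smul_apply, ContinuousLinearMap.comp_apply, confInnerL_dir, smul_eq_mul]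
  simp only [dir, ContinuousLinearMap.proj_apply, Function.update_self, PiLp.proj_apply,
    PiLp.single_eq_same]
  ring

theorem pderiv2_gaussianConf (ν C : ℝ) (z : Conf n) (i : Fin n) (k : Fin 2) :
    pderiv2 (gaussianConf ν C) (dir i k) z
      = -(2 * ν)⁻¹ * (1 - (2 * ν)⁻¹ * z i k ^ 2) * gaussianConf ν C z := by
  have h : (fun y => fderiv ℝ (gaussianConf ν C) y (dir i k))
      = fun y => -(2 * ν)⁻¹ * y i k * gaussianConf ν C y :=
    funext fun y => pderiv_gaussianConf ν C y i k
  rw [pderiv2, h]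
  exact pderiv_const_mul_coord_mul_gaussianConf ν C _ z i k

theorem mul_pderiv2_add_half_pderiv_coord_mul_gaussianConf {ν : ℝ} (hν : ν ≠ 0) (C : ℝ)
    (z : Conf n) (i : Fin n) (k : Fin 2) :
    ν * pderiv2 (gaussianConf ν C) (dir i k) z
      + 1 / 2 * pderiv (fun y => y i k * gaussianConf ν C y) (dir i k) z = 0 := by
  have h := pderiv_const_mul_coord_mul_gaussianConf ν C 1 z i k
  simp only [one_mul] at h
  rw [pderiv2_gaussianConf, h]
  field_simp
  ring

theorem sum_mul_pderiv_gaussianConf_eq_zero (ν C : ℝ) (z : Conf n) (b : Fin n → Fin 2 → ℝ)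
    (hb : ∑ i, ∑ k, b i k * z i k = 0) :
    ∑ i, ∑ k, b i k * pderiv (gaussianConf ν C) (dir i k) z = 0 := by
  calc ∑ i, ∑ k, b i k * pderiv (gaussianConf ν C) (dir i k) z
      = -(2 * ν)⁻¹ * gaussianConf ν C z * ∑ i, ∑ k, b i k * z i k := by
        simp only [pderiv_gaussianConf, mul_sum]
        exact sum_congr rfl fun i _ => sum_congr rfl fun k _ => by ring
    _ = 0 := by rw [hb, mul_zero]

end Gaussian

theorem gaussian_stationary_fokker_planck_general (n : ℕ) (ν a : ℝ) (hν : 0 < ν)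
    (pinf : Conf n → ℝ)
    (hpinf : pinf = fun y => ((4 * Real.pi * ν) ^ n)⁻¹ *
      Real.exp (-(∑ i : Fin n, ‖y i‖ ^ 2) / (4 * ν)))
    (z : Conf n) :
    ν * (∑ i : Fin n, ∑ k : Fin 2, pderiv2 pinf (dir i k) z)
      - (∑ i : Fin n, ∑ k : Fin 2,
          a * (∑ j ∈ univ.filter (· ≠ i), biotSavart (z i - z j) k)
            * pderiv pinf (dir i k) z)
      + (1 / 2) * (∑ i : Fin n, ∑ k : Fin 2,
          pderiv (fun y => y i k * pinf y) (dir i k) z)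
    = 0 := by
  obtain rfl : pinf = gaussianConf ν ((4 * Real.pi * ν) ^ n)⁻¹ := hpinf
  have hdrift := sum_mul_pderiv_gaussianConf_eq_zero ν ((4 * Real.pi * ν) ^ n)⁻¹ z
    (fun i k => a * ∑ j ∈ univ.filter (· ≠ i), biotSavart (z i - z j) k)
    (by simp only [mul_assoc, ← mul_sum, sum_sum_biotSavart_mul_eq_zero, mul_zero])
  rw [hdrift, sub_zero, mul_sum, mul_sum, ← sum_add_distrib]
  refine sum_eq_zero fun i _ => ?_
  rw [mul_sum, mul_sum, ← sum_add_distrib]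
  exact sum_eq_zero fun k _ =>
    mul_pderiv2_add_half_pderiv_coord_mul_gaussianConf hν.ne' _ z i k

/-- The Gaussian density `p_∞(z) = (4πν)^{-n} exp(-|z|²/(4ν))` satisfies the stationary
Fokker–Planck identity
`ν Δ p_∞ - ∑ᵢ a (∑_{j≠i} K(zⁱ-zʲ)) · ∇_{zⁱ} p_∞ + (1/2) ∇_z · (z p_∞) = 0`
at every configuration with pairwise distinct components. -/
theorem gaussian_stationary_fokker_planck (n : ℕ) (hn : 2 ≤ n) (ν a : ℝ) (hν : 0 < ν)
    (ha : a ≠ 0) (pinf : Conf n → ℝ)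
    (hpinf : pinf = fun y => ((4 * Real.pi * ν) ^ n)⁻¹ *
      Real.exp (-(∑ i : Fin n, ‖y i‖ ^ 2) / (4 * ν)))
    (z : Conf n) (hz : ∀ i j, i ≠ j → z i ≠ z j) :
    ν * (∑ i : Fin n, ∑ k : Fin 2, pderiv2 pinf (dir i k) z)
      - (∑ i : Fin n, ∑ k : Fin 2,
          a * (∑ j ∈ univ.filter (· ≠ i), biotSavart (z i - z j) k)
            * pderiv pinf (dir i k) z)
      + (1 / 2) * (∑ i : Fin n, ∑ k : Fin 2,
          pderiv (fun y => y i k * pinf y) (dir i k) z)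
    = 0 :=
  gaussian_stationary_fokker_planck_general n ν a hν pinf hpinf z
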